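/- Let (X,d,W) be a UCW-hyperbolic space with monotone modulus of uniform convexity η, C ⊆ X a nonempty convex subset, T : C → C nonexpansive with a fixed point, (λ_n),(s_n) sequences in [0,1], (x_n) the Ishikawa iteration starting with x ∈ C, and y_n := (1−s_n)x_n ⊕ s_n T x_n. Suppose θ : ℕ → ℕ is a rate of divergence for Σ_{n=0}^∞ λ_n(1−λ_n), and b > 0 satisfies b ≥ d(x,p) for some fixed point p of T. Then for all ε > 0 and k ∈ ℕ there exists N ∈ ℕ with k ≤ N ≤ h(ε,k,η,b,θ) and d(x_N, Ty_N) < ε, where h(ε,k,η,b,θ) := θ(⌈(b+1)/(ε·η(b, ε/b))⌉ + k) if ε ≤ 2b, and h(ε,k,η,b,θ) := k otherwise. In particular liminf_{n→∞} d(x_n, Ty_n) = 0. -/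

import Mathlib

open Set Filter Metric Bornology Function

/-- A `W`-hyperbolic space structure on a metric space `X` (Kohlenbach).
`W x y l` denotes `(1-l)x ⊕ l y`. -/
structure WHyp (X : Type*) [MetricSpace X] where
  W : X → X → ℝ → X
  W1 : ∀ (x y z : X), ∀ l ∈ Set.Icc (0:ℝ) 1,
    dist z (W x y l) ≤ (1 - l) * dist z x + l * dist z y
  W2 : ∀ (x y : X), ∀ l ∈ Set.Icc (0:ℝ) 1, ∀ l' ∈ Set.Icc (0:ℝ) 1,
    dist (W x y l) (W x y l') = |l - l'| * dist x y
  W3 : ∀ (x y : X), ∀ l ∈ Set.Icc (0:ℝ) 1, W x y l = W y x (1 - l)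
  W4 : ∀ (x y z w : X), ∀ l ∈ Set.Icc (0:ℝ) 1,
    dist (W x z l) (W y w l) ≤ (1 - l) * dist x y + l * dist z w

/-- `η` is a modulus of uniform convexity for the `W`-hyperbolic space `H`. -/
def WHyp.UnifConvex {X : Type*} [MetricSpace X] (H : WHyp X) (η : ℝ → ℝ → ℝ) : Prop :=
  (∀ r ε : ℝ, 0 < r → ε ∈ Set.Ioc (0:ℝ) 2 → η r ε ∈ Set.Ioc (0:ℝ) 1) ∧
  (∀ (r ε : ℝ) (a x y : X), 0 < r → ε ∈ Set.Ioc (0:ℝ) 2 →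
    dist x a ≤ r → dist y a ≤ r → ε * r ≤ dist x y →
    dist (H.W x y (1/2)) a ≤ (1 - η r ε) * r)

/-- A modulus of uniform convexity is monotone if it decreases in `r` for fixed `ε`. -/
def MonotoneModulus (η : ℝ → ℝ → ℝ) : Prop :=
  ∀ r s ε : ℝ, 0 < r → r ≤ s → ε ∈ Set.Ioc (0:ℝ) 2 → η s ε ≤ η r ε

/-- A subset `C` is convex in the `W`-hyperbolic space `H`. -/
def WHyp.ConvexSet {X : Type*} [MetricSpace X] (H : WHyp X) (C : Set X) : Prop :=
  ∀ x ∈ C, ∀ y ∈ C, ∀ l ∈ Set.Icc (0:ℝ) 1, H.W x y l ∈ C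

/-- The Ishikawa iteration: `x₀ = x`,
`x_{n+1} = (1-λ_n)x_n ⊕ λ_n T((1-s_n)x_n ⊕ s_n T x_n)`. -/
def WHyp.ishSeq {X : Type*} [MetricSpace X] (H : WHyp X) (T : X → X) (l s : ℕ → ℝ)
    (x : X) : ℕ → X
  | 0 => x
  | n + 1 =>
      H.W (H.ishSeq T l s x n)
        (T (H.W (H.ishSeq T l s x n) (T (H.ishSeq T l s x n)) (s n))) (l n)

/-- The bound `h(ε,k,η,b,θ)` from Proposition 4.4 of the paper. -/
noncomputable def hRate (η : ℝ → ℝ → ℝ) (b : ℝ) (θ : ℕ → ℕ) (ε : ℝ) (k : ℕ) : ℕ :=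
  if ε ≤ 2 * b then θ (⌈(b + 1) / (ε * η b (ε / b))⌉₊ + k) else k

/-! For a fixed point `p`, `dist xₙ p` is nonincreasing and bounded by `b`. While
`dist xₙ (T yₙ) ≥ ε`, uniform convexity makes each step decrease it by at least
`λₙ(1-λₙ) ε η(b, ε/b)` (monotonicity of `η` lets the radius `b` replace `dist xₙ p`). By the
choice of `θ`, the sum of the `λₙ(1-λₙ)` over `k ≤ n ≤ h(ε,k,η,b,θ)` is at least
`(b+1) / (ε η(b, ε/b))`, so this cannot happen for all these `n`. -/

theorem Finset.sum_Ico_le_of_le_sub {u c : ℕ → ℝ} {k m : ℕ} (hu : ∀ n, 0 ≤ u n)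
    (h : ∀ n ∈ Finset.Ico k m, c n ≤ u n - u (n + 1)) :
    ∑ n ∈ Finset.Ico k m, c n ≤ u k := by
  rcases le_or_gt k m with hkm | hmk
  · calc ∑ n ∈ Finset.Ico k m, c n ≤ ∑ n ∈ Finset.Ico k m, (u n - u (n + 1)) :=
          Finset.sum_le_sum h
      _ = u k - u m := by
          have htel := Finset.sum_Ico_sub u hkm
          rw [Finset.sum_sub_distrib] at htel ⊢
          linarith
      _ ≤ u k := sub_le_self _ (hu m)
  · rw [Finset.Ico_eq_empty_of_le hmk.le, Finset.sum_empty]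
    exact hu k

theorem Finset.le_sum_Ico_of_add_le_sum_range {a : ℕ → ℝ} {K : ℝ} {k m : ℕ}
    (ha₀ : ∀ i, 0 ≤ a i) (ha₁ : ∀ i, a i ≤ 1) (h : K + k ≤ ∑ i ∈ Finset.range m, a i) :
    K ≤ ∑ i ∈ Finset.Ico k m, a i := by
  have hrange : ∀ j, ∑ i ∈ Finset.range j, a i ≤ j := fun j =>
    (Finset.sum_le_sum fun i _ => ha₁ i).trans (by simp)
  rcases le_or_gt k m with hkm | hmk
  · rw [← Finset.sum_range_add_sum_Ico a hkm] at h
    linarith [hrange k]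
  · have : (m : ℝ) < k := by exact_mod_cast hmk
    linarith [hrange m, Finset.sum_nonneg fun i (_ : i ∈ Finset.Ico k m) => ha₀ i]

theorem exists_mem_Icc_of_le_sum_Ico {u c : ℕ → ℝ} {P : ℕ → Prop} {b γ : ℝ} {k M : ℕ}
    (hu : ∀ n, 0 ≤ u n) (huk : u k ≤ b) (hγ : 0 < γ)
    (hdec : ∀ n, k ≤ n → ¬P n → u (n + 1) ≤ u n - c n * γ)
    (hsum : (b + 1) / γ ≤ ∑ n ∈ Finset.Ico k (M + 1), c n) :
    ∃ N, k ≤ N ∧ N ≤ M ∧ P N := by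
  by_contra! hnot
  have htel : ∑ n ∈ Finset.Ico k (M + 1), c n * γ ≤ u k :=
    Finset.sum_Ico_le_of_le_sub hu fun n hn => by
      obtain ⟨hkn, hnM⟩ := Finset.mem_Ico.mp hn
      linarith [hdec n hkn (hnot n hkn (Nat.lt_succ_iff.mp hnM))]
  have : b + 1 ≤ ∑ n ∈ Finset.Ico k (M + 1), c n * γ := by
    rw [← Finset.sum_mul, ← div_le_iff₀ hγ]
    exact hsum
  linarith

theorem Filter.liminf_eq_zero_of_frequently_lt {ι : Type*} {f : Filter ι} {u : ι → ℝ}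
    (h₀ : ∀ i, 0 ≤ u i) (h : ∀ ε > 0, ∃ᶠ i in f, u i < ε) : liminf u f = 0 := by
  have hfreq : ∀ ε > 0, ∃ᶠ i in f, u i ≤ ε := fun ε hε => (h ε hε).mono fun _ => le_of_lt
  refine le_antisymm (le_of_forall_pos_le_add fun ε hε => ?_) ?_
  · rw [zero_add]
    exact liminf_le_of_frequently_le (hfreq ε hε) (isBoundedUnder_of ⟨0, h₀⟩)
  · exact le_liminf_of_le (IsCoboundedUnder.of_frequently_le (hfreq 1 one_pos))
      (Eventually.of_forall h₀)

theorem dist_apply_le_of_fixed {X : Type*} [MetricSpace X] {C : Set X} {T : X → X}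
    (hTne : ∀ x ∈ C, ∀ y ∈ C, dist (T x) (T y) ≤ dist x y) {p y : X} (hp : p ∈ C)
    (hpfix : T p = p) (hy : y ∈ C) : dist (T y) p ≤ dist y p := by
  simpa only [hpfix] using hTne y hy p hp

namespace WHyp

variable {X : Type*} [MetricSpace X] (H : WHyp X)

theorem W_zero (x y : X) : H.W x y 0 = x := by
  have h := H.W1 x y x 0 ⟨le_rfl, zero_le_one⟩
  simp only [dist_self, sub_zero, one_mul, zero_mul, add_zero] at h
  exact (dist_le_zero.mp h).symm

theorem W_one (x y : X) : H.W x y 1 = y := by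
  have h := H.W1 x y y 1 ⟨zero_le_one, le_rfl⟩
  simp only [dist_self, sub_self, zero_mul, one_mul, zero_add] at h
  exact (dist_le_zero.mp h).symm

theorem dist_W_left (x y : X) {l : ℝ} (hl : l ∈ Icc (0 : ℝ) 1) :
    dist x (H.W x y l) = l * dist x y := by
  have h := H.W2 x y l hl 0 ⟨le_rfl, zero_le_one⟩
  rwa [W_zero, sub_zero, abs_of_nonneg hl.1, dist_comm] at h

theorem dist_W_le_of_dist_le {x y a : X} {l : ℝ} (hl : l ∈ Icc (0 : ℝ) 1)
    (h : dist y a ≤ dist x a) : dist (H.W x y l) a ≤ dist x a := by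
  have hW := H.W1 x y a l hl
  rw [dist_comm a x, dist_comm a y] at hW
  rw [dist_comm]
  linarith [mul_le_mul_of_nonneg_left h hl.1]

variable {H} {η : ℝ → ℝ → ℝ}

/-- If `z ≠ u`, their midpoint would be strictly closer than `r` to `x`. -/
theorem UnifConvex.eq_of_dist_eq_of_dist_le (hU : H.UnifConvex η) {x m z u : X} {r r' : ℝ}
    (hz : dist x z = r) (hu : dist x u = r) (hzm : dist z m ≤ r') (hum : dist u m ≤ r')
    (hxm : r + r' ≤ dist x m) : z = u := by
  rcases (hz ▸ dist_nonneg : 0 ≤ r).eq_or_lt with hr | hr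
  · exact (dist_eq_zero.mp (hz.trans hr.symm)).symm.trans (dist_eq_zero.mp (hu.trans hr.symm))
  by_contra hne
  have hδ : 0 < dist z u := dist_pos.mpr hne
  have hδr : dist z u / r ∈ Ioc (0 : ℝ) 2 := by
    refine ⟨div_pos hδ hr, (div_le_iff₀ hr).mpr ?_⟩
    linarith [dist_triangle_left z u x]
  have hmid := hU.2 r _ x z u hr hδr (by rw [dist_comm, hz]) (by rw [dist_comm, hu])
    (div_mul_cancel₀ _ hr.ne').le
  have hη : 0 < η r (dist z u / r) * r := mul_pos (hU.1 r _ hr hδr).1 hr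
  have hWm := H.W1 z u m (1 / 2) (by norm_num)
  rw [dist_comm m z, dist_comm m u] at hWm
  linarith [dist_triangle x (H.W z u (1 / 2)) m, dist_comm x (H.W z u (1 / 2)),
    dist_comm m (H.W z u (1 / 2))]

theorem UnifConvex.W_eq_W_W_half (hU : H.UnifConvex η) (x y : X) {l : ℝ} (hl₀ : 0 ≤ l)
    (hl : l ≤ 1 / 2) : H.W x y l = H.W x (H.W x y (1 / 2)) (2 * l) := by
  have hlI : l ∈ Icc (0 : ℝ) 1 := ⟨hl₀, by linarith⟩
  have hhalf : (1 / 2 : ℝ) ∈ Icc (0 : ℝ) 1 := by norm_num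
  have h2l : 2 * l ∈ Icc (0 : ℝ) 1 := ⟨by linarith, by linarith⟩
  have hxm := H.dist_W_left x y hhalf
  refine hU.eq_of_dist_eq_of_dist_le (m := H.W x y (1 / 2)) (r' := (1 / 2 - l) * dist x y)
    (H.dist_W_left x y hlI) ?_ ?_ ?_ (by rw [hxm]; exact le_of_eq (by ring))
  · rw [H.dist_W_left _ _ h2l, hxm]; ring
  · rw [H.W2 x y l hlI _ hhalf, abs_of_nonpos (by linarith), neg_sub]
  · have h := H.W2 x (H.W x y (1 / 2)) _ h2l 1 ⟨zero_le_one, le_rfl⟩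
    rw [W_one, abs_of_nonpos (by linarith), hxm] at h
    linarith

theorem UnifConvex.dist_W_le_of_le_half (hU : H.UnifConvex η) {r ε : ℝ} (hr : 0 < r)
    (hε : ε ∈ Ioc (0 : ℝ) 2) {a x y : X} (hx : dist x a ≤ r) (hy : dist y a ≤ r)
    (hxy : ε * r ≤ dist x y) {l : ℝ} (hl₀ : 0 ≤ l) (hl : l ≤ 1 / 2) :
    dist (H.W x y l) a ≤ (1 - 2 * l * (1 - l) * η r ε) * r := by
  have hη := (hU.1 r ε hr hε).1
  have hmid := hU.2 r ε a x y hr hε hx hy hxy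
  have hW := H.W1 x (H.W x y (1 / 2)) a (2 * l) ⟨by linarith, by linarith⟩
  rw [dist_comm a x, dist_comm a (H.W x y _), dist_comm a] at hW
  rw [hU.W_eq_W_W_half x y hl₀ hl]
  nlinarith [mul_le_mul_of_nonneg_left hx (by linarith : (0 : ℝ) ≤ 1 - 2 * l),
    mul_le_mul_of_nonneg_left hmid (by linarith : (0 : ℝ) ≤ 2 * l),
    mul_nonneg (mul_nonneg (mul_nonneg hl₀ hl₀) hη.le) hr.le]

theorem UnifConvex.dist_W_le (hU : H.UnifConvex η) {r ε : ℝ} (hr : 0 < r)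
    (hε : ε ∈ Ioc (0 : ℝ) 2) {a x y : X} (hx : dist x a ≤ r) (hy : dist y a ≤ r)
    (hxy : ε * r ≤ dist x y) {l : ℝ} (hl : l ∈ Icc (0 : ℝ) 1) :
    dist (H.W x y l) a ≤ (1 - 2 * l * (1 - l) * η r ε) * r := by
  rcases le_or_gt l (1 / 2) with hl2 | hl2
  · exact hU.dist_W_le_of_le_half hr hε hx hy hxy hl.1 hl2
  · rw [H.W3 x y l hl]
    refine (hU.dist_W_le_of_le_half hr hε hy hx (dist_comm x y ▸ hxy) (l := 1 - l)
      (by linarith [hl.2]) (by linarith)).trans_eq (by ring)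

theorem UnifConvex.dist_W_le_sub (hU : H.UnifConvex η) (hmon : MonotoneModulus η) {b ε : ℝ}
    (hb : 0 < b) (hε : 0 < ε) (hεb : ε ≤ 2 * b) {a x y : X} (hxa : dist x a ≤ b)
    (hya : dist y a ≤ dist x a) (hxy : ε ≤ dist x y) {l : ℝ} (hl : l ∈ Icc (0 : ℝ) 1) :
    dist (H.W x y l) a ≤ dist x a - l * (1 - l) * (ε * η b (ε / b)) := by
  have hεb' : ε / b ∈ Ioc (0 : ℝ) 2 := ⟨div_pos hε hb, (div_le_iff₀ hb).mpr hεb⟩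
  have h2r : ε ≤ 2 * dist x a := by linarith [dist_triangle_right x y a]
  have hr : 0 < dist x a := by linarith
  have hUC := hU.dist_W_le hr hεb' le_rfl hya
    (by calc ε / b * dist x a ≤ ε / b * b := by gcongr
      _ = ε := div_mul_cancel₀ ε hb.ne'
      _ ≤ dist x y := hxy) hl
  have hηmon := hmon (dist x a) b (ε / b) hr hxa hεb'
  have hη := (hU.1 b _ hb hεb').1
  have hll : 0 ≤ l * (1 - l) := mul_nonneg hl.1 (by linarith [hl.2])
  have hγ : ε * η b (ε / b) ≤ 2 * dist x a * η (dist x a) (ε / b) :=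
    mul_le_mul h2r hηmon hη.le (by positivity)
  linarith [mul_le_mul_of_nonneg_left hγ hll]

variable {C : Set X} {T : X → X} {l s : ℕ → ℝ} {x : X}

theorem ishSeq_mem (hC : H.ConvexSet C) (hT : MapsTo T C C) (hl : ∀ n, l n ∈ Icc (0 : ℝ) 1)
    (hs : ∀ n, s n ∈ Icc (0 : ℝ) 1) (hx : x ∈ C) (n : ℕ) : H.ishSeq T l s x n ∈ C := by
  induction n with
  | zero => exact hx
  | succ n ih => exact hC _ ih _ (hT (hC _ ih _ (hT ih) _ (hs n))) _ (hl n)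

theorem dist_apply_W_apply_le (hC : H.ConvexSet C) (hT : MapsTo T C C)
    (hTne : ∀ x ∈ C, ∀ y ∈ C, dist (T x) (T y) ≤ dist x y) {p z : X} (hp : p ∈ C)
    (hpfix : T p = p) (hz : z ∈ C) {t : ℝ} (ht : t ∈ Icc (0 : ℝ) 1) :
    dist (T (H.W z (T z) t)) p ≤ dist z p :=
  (dist_apply_le_of_fixed hTne hp hpfix (hC _ hz _ (hT hz) _ ht)).trans
    (H.dist_W_le_of_dist_le ht (dist_apply_le_of_fixed hTne hp hpfix hz))

theorem dist_ishSeq_le (hC : H.ConvexSet C) (hT : MapsTo T C C)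
    (hTne : ∀ x ∈ C, ∀ y ∈ C, dist (T x) (T y) ≤ dist x y) (hl : ∀ n, l n ∈ Icc (0 : ℝ) 1)
    (hs : ∀ n, s n ∈ Icc (0 : ℝ) 1) (hx : x ∈ C) {p : X} (hp : p ∈ C) (hpfix : T p = p)
    (n : ℕ) : dist (H.ishSeq T l s x n) p ≤ dist x p := by
  refine antitone_nat_of_succ_le (f := fun n => dist (H.ishSeq T l s x n) p) (fun n => ?_)
    (Nat.zero_le n)
  exact H.dist_W_le_of_dist_le (hl n)
    (H.dist_apply_W_apply_le hC hT hTne hp hpfix (H.ishSeq_mem hC hT hl hs hx n) (hs n))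

end WHyp

theorem stmt16_general {X : Type*} [MetricSpace X] (H : WHyp X)
    (η : ℝ → ℝ → ℝ) (hU : H.UnifConvex η) (hmon : MonotoneModulus η)
    (C : Set X) (hCconv : H.ConvexSet C)
    (T : X → X) (hT : Set.MapsTo T C C)
    (hTne : ∀ x ∈ C, ∀ y ∈ C, dist (T x) (T y) ≤ dist x y)
    (l s : ℕ → ℝ) (hl : ∀ n, l n ∈ Set.Icc (0:ℝ) 1) (hs : ∀ n, s n ∈ Set.Icc (0:ℝ) 1)
    (x : X) (hx : x ∈ C)
    (xs : ℕ → X) (hxs : xs = H.ishSeq T l s x)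
    (ys : ℕ → X) (hys : ∀ n, ys n = H.W (xs n) (T (xs n)) (s n))
    (θ : ℕ → ℕ)
    (hθ : ∀ n : ℕ, (n : ℝ) ≤ ∑ i ∈ Finset.range (θ n + 1), l i * (1 - l i))
    (b : ℝ) (hb : 0 < b) (hbp : ∃ p ∈ C, T p = p ∧ dist x p ≤ b) :
    (∀ ε : ℝ, 0 < ε → ∀ k : ℕ, ∃ N : ℕ, k ≤ N ∧ N ≤ hRate η b θ ε k ∧
      dist (xs N) (T (ys N)) < ε) ∧
    Filter.liminf (fun n => dist (xs n) (T (ys n))) Filter.atTop = 0 := by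
  obtain ⟨p, hpC, hpfix, hpb⟩ := hbp
  have hxp n : dist (xs n) p ≤ b :=
    hxs ▸ (H.dist_ishSeq_le hCconv hT hTne hl hs hx hpC hpfix n).trans hpb
  have hyp n : dist (T (ys n)) p ≤ dist (xs n) p := by
    rw [hys, hxs]
    exact H.dist_apply_W_apply_le hCconv hT hTne hpC hpfix (H.ishSeq_mem hCconv hT hl hs hx n)
      (hs n)
  have hstep n : xs (n + 1) = H.W (xs n) (T (ys n)) (l n) := by rw [hys, hxs]; rfl
  suffices hrate : ∀ ε : ℝ, 0 < ε → ∀ k : ℕ, ∃ N : ℕ, k ≤ N ∧ N ≤ hRate η b θ ε k ∧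
      dist (xs N) (T (ys N)) < ε from
    ⟨hrate, Filter.liminf_eq_zero_of_frequently_lt (fun n => dist_nonneg) fun ε hε =>
      Filter.frequently_atTop.mpr fun k => (hrate ε hε k).imp fun N hN => ⟨hN.1, hN.2.2⟩⟩
  intro ε hε k
  rw [hRate]
  split_ifs with hεb
  · have hη := (hU.1 b (ε / b) hb ⟨div_pos hε hb, (div_le_iff₀ hb).mpr hεb⟩).1
    have hll i : l i * (1 - l i) ∈ Icc (0 : ℝ) 1 :=
      ⟨mul_nonneg (hl i).1 (by linarith [(hl i).2]), by nlinarith [(hl i).1, (hl i).2]⟩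
    refine exists_mem_Icc_of_le_sum_Ico (fun n => dist_nonneg) (hxp k) (by positivity)
      (fun n _ hn => hstep n ▸
        hU.dist_W_le_sub hmon hb hε hεb (hxp n) (hyp n) (not_lt.mp hn) (hl n))
      (Finset.le_sum_Ico_of_add_le_sum_range (fun i => (hll i).1) (fun i => (hll i).2) ?_)
    calc (b + 1) / (ε * η b (ε / b)) + k ≤ ((⌈(b + 1) / (ε * η b (ε / b))⌉₊ + k : ℕ) : ℝ) := by
          push_cast; gcongr; exact Nat.le_ceil _
      _ ≤ _ := hθ _
  · refine ⟨k, le_rfl, le_rfl, lt_of_le_of_lt ?_ (not_le.mp hεb)⟩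
    linarith [dist_triangle_right (xs k) (T (ys k)) p, hxp k, hyp k]

theorem stmt16 {X : Type*} [MetricSpace X] (H : WHyp X)
    (η : ℝ → ℝ → ℝ) (hU : H.UnifConvex η) (hmon : MonotoneModulus η)
    (C : Set X) (hCne : C.Nonempty) (hCconv : H.ConvexSet C)
    (T : X → X) (hT : Set.MapsTo T C C)
    (hTne : ∀ x ∈ C, ∀ y ∈ C, dist (T x) (T y) ≤ dist x y)
    (l s : ℕ → ℝ) (hl : ∀ n, l n ∈ Set.Icc (0:ℝ) 1) (hs : ∀ n, s n ∈ Set.Icc (0:ℝ) 1)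
    (x : X) (hx : x ∈ C)
    (xs : ℕ → X) (hxs : xs = H.ishSeq T l s x)
    (ys : ℕ → X) (hys : ∀ n, ys n = H.W (xs n) (T (xs n)) (s n))
    (θ : ℕ → ℕ)
    (hθ : ∀ n : ℕ, (n : ℝ) ≤ ∑ i ∈ Finset.range (θ n + 1), l i * (1 - l i))
    (b : ℝ) (hb : 0 < b) (hbp : ∃ p ∈ C, T p = p ∧ dist x p ≤ b) :
    (∀ ε : ℝ, 0 < ε → ∀ k : ℕ, ∃ N : ℕ, k ≤ N ∧ N ≤ hRate η b θ ε k ∧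
      dist (xs N) (T (ys N)) < ε) ∧
    Filter.liminf (fun n => dist (xs n) (T (ys n))) Filter.atTop = 0 :=
  stmt16_general H η hU hmon C hCconv T hT hTne l s hl hs x hx xs hxs ys hys θ hθ b hb hbp
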